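/- For every (z,w) in the Cartan–Hartogs domain M_Ω(μ) and all 1 ≤ j,k ≤ d, the (j,k) entry of the inverse of the (d+1)×(d+1) matrix g(μ)(z,w) satisfies g(μ)^{jk̄}(z,w) = ((N(z)^μ − |w|²)/N(z)^μ) · g^{jk̄}_{Ω(μ)}(z). -/

import Mathlib

open Complex Matrix
open scoped ComplexOrder

noncomputable section

/-- Wirtinger derivative `∂f/∂z_j` of a function `f : ℂ^n → ℂ`. -/
def wD {n : ℕ} (j : Fin n) (f : (Fin n → ℂ) → ℂ) : (Fin n → ℂ) → ℂ :=
  fun p => (1 / 2 : ℂ) *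
    (fderiv ℝ f p (Pi.single j 1) - Complex.I * fderiv ℝ f p (Pi.single j Complex.I))

/-- Conjugate Wirtinger derivative `∂f/∂z̄_j` of a function `f : ℂ^n → ℂ`. -/
def wDbar {n : ℕ} (j : Fin n) (f : (Fin n → ℂ) → ℂ) : (Fin n → ℂ) → ℂ :=
  fun p => (1 / 2 : ℂ) *
    (fderiv ℝ f p (Pi.single j 1) + Complex.I * fderiv ℝ f p (Pi.single j Complex.I))

variable (d : ℕ) (μ : ℝ) (N : (Fin d → ℂ) → ℝ)

/-- `N^μ` as a complex-valued function on `ℂ^d`. -/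
def NmuC : (Fin d → ℂ) → ℂ := fun z => ((N z ^ μ : ℝ) : ℂ)

/-- The Kähler potential `Φ(z,w) = -log(N(z)^μ - |w|²)` of the Cartan–Hartogs domain,
identifying `(z,w)` with the point `p : ℂ^{d+1}`, `z = p ∘ castSucc`, `w = p (last)`. -/
def CHpot : (Fin (d + 1) → ℂ) → ℂ :=
  fun p =>
    -(((Real.log (N (fun j => p j.castSucc) ^ μ - ‖p (Fin.last d)‖ ^ 2)) : ℂ))

/-- The component `g(μ)_{αβ̄} = ∂²Φ/∂z_α∂z̄_β` of the Cartan--Hartogs metric. -/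
def gCH (α β : Fin (d + 1)) : (Fin (d + 1) → ℂ) → ℂ := wD α (wDbar β (CHpot d μ N))

/-- The matrix of the Cartan--Hartogs metric `g(μ)` at a point `p`. -/
def gCHmat (p : Fin (d + 1) → ℂ) : Matrix (Fin (d + 1)) (Fin (d + 1)) ℂ :=
  Matrix.of fun α β => gCH d μ N α β p

/-- The component `g^{Ω(μ)}_{jk̄} = -∂² log N^μ/∂z_j∂z̄_k`. -/
def gOm (j k : Fin d) : (Fin d → ℂ) → ℂ :=
  fun z => -(wD j (wDbar k fun y => ((Real.log (N y ^ μ) : ℝ) : ℂ)) z)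

/-- The matrix of the metric `g^{Ω(μ)}` at a point `z ∈ Ω`. -/
def gOmMat (z : Fin d → ℂ) : Matrix (Fin d) (Fin d) ℂ :=
  Matrix.of fun j k => gOm d μ N j k z

/-- The Ricci tensor `Ric_{αβ̄} = -∂² log det(g(μ))/∂z_α∂z̄_β` of `g(μ)`. -/
def RicCH (α β : Fin (d + 1)) : (Fin (d + 1) → ℂ) → ℂ :=
  fun p => -(wD α (wDbar β fun q => Complex.log ((gCHmat d μ N q).det)) p)

/-- The scalar curvature `κ_{g(μ)} = Σ_{α,β} g(μ)^{βᾱ} Ric_{αβ̄}` of `g(μ)`. -/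
def scalCH : (Fin (d + 1) → ℂ) → ℂ :=
  fun p => ∑ α : Fin (d + 1), ∑ β : Fin (d + 1),
    (gCHmat d μ N p)⁻¹ β α * RicCH d μ N α β p

/-- The curvature tensor
`R_{αβ̄ητ̄} = -g(μ)_{αβ̄ητ̄} + Σ_{ζ,θ} g(μ)^{ζθ̄} g(μ)_{αζ̄η} g(μ)_{θτ̄β̄}` of `g(μ)`. -/
def Rcurv (α β η τ : Fin (d + 1)) : (Fin (d + 1) → ℂ) → ℂ :=
  fun p => -(wDbar τ (wD η (gCH d μ N α β)) p) +
    ∑ ζ : Fin (d + 1), ∑ θ : Fin (d + 1),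
      (gCHmat d μ N p)⁻¹ ζ θ * wD η (gCH d μ N α ζ) p * wDbar β (gCH d μ N θ τ) p

/-- The squared norm `|R|²` of the curvature tensor of `g(μ)`. -/
def Rnorm2 : (Fin (d + 1) → ℂ) → ℂ :=
  fun p => ∑ α : Fin (d+1), ∑ β : Fin (d+1), ∑ η : Fin (d+1), ∑ θ : Fin (d+1),
    ∑ ζ : Fin (d+1), ∑ ν : Fin (d+1), ∑ ξ : Fin (d+1), ∑ τ : Fin (d+1),
      (starRingEnd ℂ) ((gCHmat d μ N p)⁻¹ α ζ) * (gCHmat d μ N p)⁻¹ β ν *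
      (starRingEnd ℂ) ((gCHmat d μ N p)⁻¹ η ξ) * (gCHmat d μ N p)⁻¹ θ τ *
      Rcurv d μ N α β η θ p * (starRingEnd ℂ) (Rcurv d μ N ζ ν ξ τ p)

/-- The squared norm `|Ric|²` of the Ricci tensor of `g(μ)`. -/
def RicNorm2 : (Fin (d + 1) → ℂ) → ℂ :=
  fun p => ∑ α : Fin (d+1), ∑ β : Fin (d+1), ∑ η : Fin (d+1), ∑ τ : Fin (d+1),
    (starRingEnd ℂ) ((gCHmat d μ N p)⁻¹ η τ) * (gCHmat d μ N p)⁻¹ α β *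
    RicCH d μ N η α p * (starRingEnd ℂ) (RicCH d μ N τ β p)

/-- The Laplacian `Δκ_{g(μ)} = Σ_{α,β} g(μ)^{αβ̄} ∂²κ_{g(μ)}/∂z_α∂z̄_β`. -/
def lapScalCH : (Fin (d + 1) → ℂ) → ℂ :=
  fun p => ∑ α : Fin (d+1), ∑ β : Fin (d+1),
    (gCHmat d μ N p)⁻¹ α β * wDbar β (wD α (scalCH d μ N)) p

/-- The Ricci tensor of `g^{Ω(μ)}`. -/
def RicOm (j k : Fin d) : (Fin d → ℂ) → ℂ :=
  fun z => -(wD j (wDbar k fun y => Complex.log ((gOmMat d μ N y).det)) z)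

/-- The scalar curvature `κ_{g^{Ω(μ)}}` of `g^{Ω(μ)}`. -/
def scalOm : (Fin d → ℂ) → ℂ :=
  fun z => ∑ j : Fin d, ∑ k : Fin d, (gOmMat d μ N z)⁻¹ k j * RicOm d μ N j k z

/-- The curvature tensor of `g^{Ω(μ)}`. -/
def RcurvOm (i j k l : Fin d) : (Fin d → ℂ) → ℂ :=
  fun z => -(wDbar l (wD k (gOm d μ N i j)) z) +
    ∑ p : Fin d, ∑ q : Fin d,
      (gOmMat d μ N z)⁻¹ p q * wD k (gOm d μ N i p) z * wDbar j (gOm d μ N q l) z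

/-- The squared norm `|R_{g^{Ω(μ)}}|²` of the curvature tensor of `g^{Ω(μ)}`. -/
def Rnorm2Om : (Fin d → ℂ) → ℂ :=
  fun z => ∑ α : Fin d, ∑ β : Fin d, ∑ η : Fin d, ∑ θ : Fin d,
    ∑ ζ : Fin d, ∑ ν : Fin d, ∑ ξ : Fin d, ∑ τ : Fin d,
      (starRingEnd ℂ) ((gOmMat d μ N z)⁻¹ α ζ) * (gOmMat d μ N z)⁻¹ β ν *
      (starRingEnd ℂ) ((gOmMat d μ N z)⁻¹ η ξ) * (gOmMat d μ N z)⁻¹ θ τ *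
      RcurvOm d μ N α β η θ z * (starRingEnd ℂ) (RcurvOm d μ N ζ ν ξ τ z)

end

noncomputable section AuxHelpers

section WirtingerHelpers

variable {n : ℕ}

lemma wD_congr {f g : (Fin n → ℂ) → ℂ} {p : Fin n → ℂ} (j : Fin n)
    (h : f =ᶠ[nhds p] g) : wD j f p = wD j g p := by
  unfold wD; rw [Filter.EventuallyEq.fderiv_eq h]

lemma wDbar_congr {f g : (Fin n → ℂ) → ℂ} {p : Fin n → ℂ} (j : Fin n)
    (h : f =ᶠ[nhds p] g) : wDbar j f p = wDbar j g p := by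
  unfold wDbar; rw [Filter.EventuallyEq.fderiv_eq h]

lemma wD_of_hasFDerivAt {f : (Fin n → ℂ) → ℂ} {p : Fin n → ℂ}
    {L : (Fin n → ℂ) →L[ℝ] ℂ} (j : Fin n) (h : HasFDerivAt f L p) :
    wD j f p = (1/2 : ℂ) * (L (Pi.single j 1) - Complex.I * L (Pi.single j Complex.I)) := by
  unfold wD; rw [h.fderiv]

lemma wDbar_of_hasFDerivAt {f : (Fin n → ℂ) → ℂ} {p : Fin n → ℂ}
    {L : (Fin n → ℂ) →L[ℝ] ℂ} (j : Fin n) (h : HasFDerivAt f L p) :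
    wDbar j f p = (1/2 : ℂ) * (L (Pi.single j 1) + Complex.I * L (Pi.single j Complex.I)) := by
  unfold wDbar; rw [h.fderiv]

lemma wD_neg (j : Fin n) (f : (Fin n → ℂ) → ℂ) (p : Fin n → ℂ) :
    wD j (fun q => -(f q)) p = -(wD j f p) := by
  unfold wD; rw [fderiv_fun_neg]; simp only [ContinuousLinearMap.neg_apply]; ring

lemma wDbar_neg (j : Fin n) (f : (Fin n → ℂ) → ℂ) (p : Fin n → ℂ) :
    wDbar j (fun q => -(f q)) p = -(wDbar j f p) := by
  unfold wDbar; rw [fderiv_fun_neg]; simp only [ContinuousLinearMap.neg_apply]; ring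

lemma wD_mul {f g : (Fin n → ℂ) → ℂ} {p : Fin n → ℂ} (j : Fin n)
    (hf : DifferentiableAt ℝ f p) (hg : DifferentiableAt ℝ g p) :
    wD j (fun q => f q * g q) p = wD j f p * g p + f p * wD j g p := by
  unfold wD; rw [fderiv_fun_mul hf hg]
  simp only [ContinuousLinearMap.add_apply, ContinuousLinearMap.smul_apply, smul_eq_mul]
  ring

lemma wDbar_mul {f g : (Fin n → ℂ) → ℂ} {p : Fin n → ℂ} (j : Fin n)
    (hf : DifferentiableAt ℝ f p) (hg : DifferentiableAt ℝ g p) :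
    wDbar j (fun q => f q * g q) p = wDbar j f p * g p + f p * wDbar j g p := by
  unfold wDbar; rw [fderiv_fun_mul hf hg]
  simp only [ContinuousLinearMap.add_apply, ContinuousLinearMap.smul_apply, smul_eq_mul]
  ring

lemma wD_sub {f g : (Fin n → ℂ) → ℂ} {p : Fin n → ℂ} (j : Fin n)
    (hf : DifferentiableAt ℝ f p) (hg : DifferentiableAt ℝ g p) :
    wD j (fun q => f q - g q) p = wD j f p - wD j g p := by
  unfold wD; rw [fderiv_fun_sub hf hg]; simp only [ContinuousLinearMap.sub_apply]; ring

lemma wDbar_sub {f g : (Fin n → ℂ) → ℂ} {p : Fin n → ℂ} (j : Fin n)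
    (hf : DifferentiableAt ℝ f p) (hg : DifferentiableAt ℝ g p) :
    wDbar j (fun q => f q - g q) p = wDbar j f p - wDbar j g p := by
  unfold wDbar; rw [fderiv_fun_sub hf hg]; simp only [ContinuousLinearMap.sub_apply]; ring

lemma wD_inv {f : (Fin n → ℂ) → ℂ} {p : Fin n → ℂ} (j : Fin n)
    (hf : DifferentiableAt ℝ f p) (h0 : f p ≠ 0) :
    wD j (fun q => (f q)⁻¹) p = -(wD j f p) / (f p)^2 := by
  have h : HasFDerivAt (fun q => (f q)⁻¹)
      ((-ContinuousLinearMap.mulLeftRight ℝ ℂ (f p)⁻¹ (f p)⁻¹).comp (fderiv ℝ f p)) p :=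
    (hasFDerivAt_inv' h0).comp p hf.hasFDerivAt
  rw [wD_of_hasFDerivAt j h]
  unfold wD
  simp only [ContinuousLinearMap.comp_apply, ContinuousLinearMap.neg_apply,
    ContinuousLinearMap.mulLeftRight_apply]
  field_simp
  ring

lemma wDbar_inv {f : (Fin n → ℂ) → ℂ} {p : Fin n → ℂ} (j : Fin n)
    (hf : DifferentiableAt ℝ f p) (h0 : f p ≠ 0) :
    wDbar j (fun q => (f q)⁻¹) p = -(wDbar j f p) / (f p)^2 := by
  have h : HasFDerivAt (fun q => (f q)⁻¹)
      ((-ContinuousLinearMap.mulLeftRight ℝ ℂ (f p)⁻¹ (f p)⁻¹).comp (fderiv ℝ f p)) p :=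
    (hasFDerivAt_inv' h0).comp p hf.hasFDerivAt
  rw [wDbar_of_hasFDerivAt j h]
  unfold wDbar
  simp only [ContinuousLinearMap.comp_apply, ContinuousLinearMap.neg_apply,
    ContinuousLinearMap.mulLeftRight_apply]
  field_simp
  ring

lemma wD_ofReal_log {f : (Fin n → ℂ) → ℝ} {p : Fin n → ℂ} (j : Fin n)
    (hf : DifferentiableAt ℝ f p) (h0 : f p ≠ 0) :
    wD j (fun q => ((Real.log (f q) : ℝ) : ℂ)) p
      = wD j (fun q => ((f q : ℝ) : ℂ)) p * (((f p : ℝ) : ℂ))⁻¹ := by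
  have h1 : HasFDerivAt (fun q => Real.log (f q)) ((f p)⁻¹ • fderiv ℝ f p) p :=
    (Real.hasDerivAt_log h0).comp_hasFDerivAt p hf.hasFDerivAt
  have h2 : HasFDerivAt (fun q => ((Real.log (f q) : ℝ) : ℂ))
      (Complex.ofRealCLM.comp ((f p)⁻¹ • fderiv ℝ f p)) p :=
    Complex.ofRealCLM.hasFDerivAt.comp p h1
  have h3 : HasFDerivAt (fun q => ((f q : ℝ) : ℂ))
      (Complex.ofRealCLM.comp (fderiv ℝ f p)) p :=
    Complex.ofRealCLM.hasFDerivAt.comp p hf.hasFDerivAt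
  rw [wD_of_hasFDerivAt j h2, wD_of_hasFDerivAt j h3]
  simp only [ContinuousLinearMap.comp_apply, ContinuousLinearMap.smul_apply,
    Complex.ofRealCLM_apply, smul_eq_mul, Complex.ofReal_mul, Complex.ofReal_inv]
  ring

lemma wDbar_ofReal_log {f : (Fin n → ℂ) → ℝ} {p : Fin n → ℂ} (j : Fin n)
    (hf : DifferentiableAt ℝ f p) (h0 : f p ≠ 0) :
    wDbar j (fun q => ((Real.log (f q) : ℝ) : ℂ)) p
      = wDbar j (fun q => ((f q : ℝ) : ℂ)) p * (((f p : ℝ) : ℂ))⁻¹ := by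
  have h1 : HasFDerivAt (fun q => Real.log (f q)) ((f p)⁻¹ • fderiv ℝ f p) p :=
    (Real.hasDerivAt_log h0).comp_hasFDerivAt p hf.hasFDerivAt
  have h2 : HasFDerivAt (fun q => ((Real.log (f q) : ℝ) : ℂ))
      (Complex.ofRealCLM.comp ((f p)⁻¹ • fderiv ℝ f p)) p :=
    Complex.ofRealCLM.hasFDerivAt.comp p h1
  have h3 : HasFDerivAt (fun q => ((f q : ℝ) : ℂ))
      (Complex.ofRealCLM.comp (fderiv ℝ f p)) p :=
    Complex.ofRealCLM.hasFDerivAt.comp p hf.hasFDerivAt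
  rw [wDbar_of_hasFDerivAt j h2, wDbar_of_hasFDerivAt j h3]
  simp only [ContinuousLinearMap.comp_apply, ContinuousLinearMap.smul_apply,
    Complex.ofRealCLM_apply, smul_eq_mul, Complex.ofReal_mul, Complex.ofReal_inv]
  ring

lemma wD_clm (j : Fin n) (L : (Fin n → ℂ) →L[ℝ] ℂ) (p : Fin n → ℂ) :
    wD j (fun q => L q) p
      = (1/2 : ℂ) * (L (Pi.single j 1) - Complex.I * L (Pi.single j Complex.I)) :=
  wD_of_hasFDerivAt j L.hasFDerivAt

lemma wDbar_clm (j : Fin n) (L : (Fin n → ℂ) →L[ℝ] ℂ) (p : Fin n → ℂ) :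
    wDbar j (fun q => L q) p
      = (1/2 : ℂ) * (L (Pi.single j 1) + Complex.I * L (Pi.single j Complex.I)) :=
  wDbar_of_hasFDerivAt j L.hasFDerivAt

end WirtingerHelpers

section PiL

def piL (d : ℕ) : (Fin (d+1) → ℂ) →L[ℝ] (Fin d → ℂ) :=
  ContinuousLinearMap.pi fun j => ContinuousLinearMap.proj j.castSucc

@[simp] lemma piL_apply (d : ℕ) (p : Fin (d+1) → ℂ) (j : Fin d) :
    piL d p j = p j.castSucc := rfl

lemma piL_single_castSucc (d : ℕ) (j : Fin d) (c : ℂ) :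
    piL d (Pi.single j.castSucc c) = Pi.single j c := by
  funext l
  simp only [piL_apply, Pi.single_apply, Fin.castSucc_inj]

lemma piL_single_last (d : ℕ) (c : ℂ) : piL d (Pi.single (Fin.last d) c) = 0 := by
  funext l
  simp [Pi.single_apply, (Fin.castSucc_lt_last l).ne]

lemma wD_comp_piL {d : ℕ} {f : (Fin d → ℂ) → ℂ} {p : Fin (d+1) → ℂ} (j : Fin d)
    (hf : DifferentiableAt ℝ f (piL d p)) :
    wD j.castSucc (fun q => f (piL d q)) p = wD j f (piL d p) := by
  have h : HasFDerivAt (fun q => f (piL d q)) ((fderiv ℝ f (piL d p)).comp (piL d)) p :=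
    hf.hasFDerivAt.comp p (piL d).hasFDerivAt
  rw [wD_of_hasFDerivAt j.castSucc h]
  simp only [ContinuousLinearMap.comp_apply, piL_single_castSucc]
  rfl

lemma wDbar_comp_piL {d : ℕ} {f : (Fin d → ℂ) → ℂ} {p : Fin (d+1) → ℂ} (j : Fin d)
    (hf : DifferentiableAt ℝ f (piL d p)) :
    wDbar j.castSucc (fun q => f (piL d q)) p = wDbar j f (piL d p) := by
  have h : HasFDerivAt (fun q => f (piL d q)) ((fderiv ℝ f (piL d p)).comp (piL d)) p :=
    hf.hasFDerivAt.comp p (piL d).hasFDerivAt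
  rw [wDbar_of_hasFDerivAt j.castSucc h]
  simp only [ContinuousLinearMap.comp_apply, piL_single_castSucc]
  rfl

lemma wD_last_comp_piL {d : ℕ} {f : (Fin d → ℂ) → ℂ} {p : Fin (d+1) → ℂ}
    (hf : DifferentiableAt ℝ f (piL d p)) :
    wD (Fin.last d) (fun q => f (piL d q)) p = 0 := by
  have h : HasFDerivAt (fun q => f (piL d q)) ((fderiv ℝ f (piL d p)).comp (piL d)) p :=
    hf.hasFDerivAt.comp p (piL d).hasFDerivAt
  rw [wD_of_hasFDerivAt (Fin.last d) h]
  simp [ContinuousLinearMap.comp_apply, piL_single_last]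

lemma wDbar_last_comp_piL {d : ℕ} {f : (Fin d → ℂ) → ℂ} {p : Fin (d+1) → ℂ}
    (hf : DifferentiableAt ℝ f (piL d p)) :
    wDbar (Fin.last d) (fun q => f (piL d q)) p = 0 := by
  have h : HasFDerivAt (fun q => f (piL d q)) ((fderiv ℝ f (piL d p)).comp (piL d)) p :=
    hf.hasFDerivAt.comp p (piL d).hasFDerivAt
  rw [wDbar_of_hasFDerivAt (Fin.last d) h]
  simp [ContinuousLinearMap.comp_apply, piL_single_last]

end PiL

end AuxHelpers

set_option maxHeartbeats 1000000 in
/-- the (j,k) entry of the inverse of the Cartan–Hartogs metric matrix. -/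
theorem inv_gCH_entries (d : ℕ) (hd : 1 ≤ d) (γ μ : ℝ) (hγ : 0 < γ) (hμ : 0 < μ)
    (Ω : Set (Fin d → ℂ)) (hΩopen : IsOpen Ω) (hΩconn : IsPreconnected Ω)
    (N : (Fin d → ℂ) → ℝ) (hNsm : ContDiffOn ℝ (⊤ : ℕ∞) N Ω) (hNpos : ∀ z ∈ Ω, 0 < N z)
    (hgOmPD : ∀ z ∈ Ω, (gOmMat d μ N z).PosDef)
    (hgPD : ∀ z ∈ Ω, ∀ w : ℂ, ‖w‖ ^ 2 < N z ^ μ →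
      (gCHmat d μ N (Fin.snoc z w)).PosDef)
    (z : Fin d → ℂ) (w : ℂ) (hz : z ∈ Ω) (hw : ‖w‖ ^ 2 < N z ^ μ)
    (j k : Fin d) :
    (gCHmat d μ N (Fin.snoc z w))⁻¹ j.castSucc k.castSucc =
      (((N z ^ μ - ‖w‖ ^ 2) / N z ^ μ : ℝ) : ℂ) * (gOmMat d μ N z)⁻¹ j k := by
  classical
  have hmemΩ : Ω ∈ nhds z := hΩopen.mem_nhds hz
  have hone_le : ((⊤ : ℕ∞) : WithTop ℕ∞) ≠ 0 := by simp
  have htop1 : ((⊤ : ℕ∞) : WithTop ℕ∞) + 1 ≤ ((⊤ : ℕ∞) : WithTop ℕ∞) :=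
    le_of_eq ENat.coe_top_add_one
  set Fc : (Fin d → ℂ) → ℂ := fun x => ((N x ^ μ : ℝ) : ℂ) with hFcdef
  have hFrpos : ∀ y ∈ Ω, 0 < N y ^ μ := fun y hy => Real.rpow_pos_of_pos (hNpos y hy) μ
  have hFrAt : ∀ y ∈ Ω, ContDiffAt ℝ (⊤ : ℕ∞) (fun x => N x ^ μ) y := fun y hy =>
    ((hNsm.of_le (by simp)).contDiffAt (hΩopen.mem_nhds hy)).rpow_const_of_ne (hNpos y hy).ne'
  have hFcAt : ∀ y ∈ Ω, ContDiffAt ℝ (⊤ : ℕ∞) Fc y := fun y hy =>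
    Complex.ofRealCLM.contDiff.comp_contDiffAt y (hFrAt y hy)
  have hdFcAt : ∀ (v : Fin d → ℂ), ∀ y ∈ Ω,
      ContDiffAt ℝ (⊤ : ℕ∞) (fun q => fderiv ℝ Fc q v) y := by
    intro v y hy
    have h1 : ContDiffAt ℝ (⊤ : ℕ∞) (fderiv ℝ Fc) y := (hFcAt y hy).fderiv_right htop1
    exact (ContinuousLinearMap.apply ℝ ℂ v).contDiff.comp_contDiffAt y h1
  have hwDbarFcAt : ∀ (k : Fin d), ∀ y ∈ Ω, ContDiffAt ℝ (⊤ : ℕ∞) (wDbar k Fc) y := by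
    intro k y hy
    show ContDiffAt ℝ (⊤ : ℕ∞) (fun q => (1/2 : ℂ) *
      (fderiv ℝ Fc q (Pi.single k 1) + Complex.I * fderiv ℝ Fc q (Pi.single k Complex.I))) y
    exact contDiffAt_const.mul ((hdFcAt _ y hy).add (contDiffAt_const.mul (hdFcAt _ y hy)))
  have hFcd : ∀ y ∈ Ω, DifferentiableAt ℝ Fc y := fun y hy =>
    (hFcAt y hy).differentiableAt hone_le
  have hFrd : ∀ y ∈ Ω, DifferentiableAt ℝ (fun x => N x ^ μ) y := fun y hy =>
    (hFrAt y hy).differentiableAt hone_le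
  have hCkd : ∀ (k : Fin d), ∀ y ∈ Ω, DifferentiableAt ℝ (wDbar k Fc) y := fun k y hy =>
    (hwDbarFcAt k y hy).differentiableAt hone_le
  set a : Fin d → ℂ := fun j => wD j Fc z with hadef
  set c : Fin d → ℂ := fun k => wDbar k Fc z with hcdef
  set B : Fin d → Fin d → ℂ := fun j k => wD j (wDbar k Fc) z with hBdef
  set f : ℂ := ((N z ^ μ : ℝ) : ℂ) with hfdef
  have hf0 : f ≠ 0 := Complex.ofReal_ne_zero.mpr (hFrpos z hz).ne'
  have hFcz : Fc z = f := rfl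
  -- the entries of g^{Ω(μ)}
  have hgOmval : ∀ j' k' : Fin d,
      gOmMat d μ N z j' k' = -(B j' k') * f⁻¹ + a j' * c k' * (f^2)⁻¹ := by
    intro j' k'
    have hloc : ∀ q ∈ Ω, (wDbar k' fun y => ((Real.log (N y ^ μ) : ℝ) : ℂ)) q
        = wDbar k' Fc q * (Fc q)⁻¹ := fun q hq =>
      wDbar_ofReal_log k' (hFrd q hq) (hFrpos q hq).ne'
    have hev : (wDbar k' fun y => ((Real.log (N y ^ μ) : ℝ) : ℂ)) =ᶠ[nhds z]
        (fun q => wDbar k' Fc q * (Fc q)⁻¹) := Filter.eventuallyEq_of_mem hmemΩ hloc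
    have h1 : wD j' (wDbar k' fun y => ((Real.log (N y ^ μ) : ℝ) : ℂ)) z
        = wD j' (fun q => wDbar k' Fc q * (Fc q)⁻¹) z := wD_congr j' hev
    have h2 : wD j' (fun q => wDbar k' Fc q * (Fc q)⁻¹) z
        = wD j' (wDbar k' Fc) z * (Fc z)⁻¹ + wDbar k' Fc z * wD j' (fun q => (Fc q)⁻¹) z :=
      wD_mul j' (hCkd k' z hz) ((hFcd z hz).inv hf0)
    have h3 : wD j' (fun q => (Fc q)⁻¹) z = -(wD j' Fc z) / (Fc z)^2 :=
      wD_inv j' (hFcd z hz) hf0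
    show gOm d μ N j' k' z = _
    unfold gOm
    rw [h1, h2, h3, hFcz]
    simp only [hadef, hcdef, hBdef]
    field_simp
    ring
  -- the point p0 and geometry upstairs
  set p0 : Fin (d+1) → ℂ := Fin.snoc z w with hp0def
  have hπ : piL d p0 = z := by
    funext j'; rw [piL_apply, hp0def, Fin.snoc_castSucc]
  have hlast : p0 (Fin.last d) = w := by rw [hp0def, Fin.snoc_last]
  set cl : (Fin (d+1) → ℂ) →L[ℝ] ℂ :=
    (ContinuousLinearMap.proj (Fin.last d) : (Fin (d+1) → ℂ) →L[ℝ] ℂ) with hcldef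
  set cj : (Fin (d+1) → ℂ) →L[ℝ] ℂ :=
    ((Complex.conjCLE : ℂ ≃L[ℝ] ℂ) : ℂ →L[ℝ] ℂ).comp
      (ContinuousLinearMap.proj (Fin.last d) : (Fin (d+1) → ℂ) →L[ℝ] ℂ) with hcjdef
  have hclval : ∀ p : Fin (d+1) → ℂ, cl p = p (Fin.last d) := fun p => rfl
  have hcjval : ∀ p : Fin (d+1) → ℂ, cj p = (starRingEnd ℂ) (p (Fin.last d)) := fun p => by
    rw [hcjdef]
    simp [Complex.conjCLE_apply]
  set Yr : (Fin (d+1) → ℂ) → ℝ :=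
    fun p => N (piL d p) ^ μ - ‖p (Fin.last d)‖ ^ 2 with hYrdef
  set Yc : (Fin (d+1) → ℂ) → ℂ := fun p => Fc (piL d p) - cl p * cj p with hYcdef
  have hYcYr : ∀ p, Yc p = ((Yr p : ℝ) : ℂ) := by
    intro p
    rw [hYcdef, hYrdef]
    simp only [Complex.ofReal_sub]
    rw [hclval, hcjval, Complex.mul_conj, Complex.sq_norm]
  have hCH : CHpot d μ N = fun p => -(((Real.log (Yr p) : ℝ) : ℂ)) := rfl
  -- the open set U
  set U : Set (Fin (d+1) → ℂ) := (piL d ⁻¹' Ω) ∩ (Yr ⁻¹' Set.Ioi 0) with hUdef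
  have habs2 : ContDiff ℝ (⊤ : ℕ∞) (fun x : ℂ => ‖x‖ ^ 2) := by
    have h := contDiff_norm_sq (𝕜 := ℂ) (E := ℂ) (n := (⊤ : ℕ∞))
    simpa using h
  have hYrcont : ContinuousOn Yr (piL d ⁻¹' Ω) := by
    intro q hq
    have h1 : ContinuousAt (fun p : Fin (d+1) → ℂ => N (piL d p) ^ μ) q :=
      (hFrAt _ hq).continuousAt.comp (piL d).continuous.continuousAt
    have h2 : ContinuousAt (fun p : Fin (d+1) → ℂ => ‖p (Fin.last d)‖ ^ 2) q :=
      ((continuous_norm.comp (continuous_apply (Fin.last d))).pow 2).continuousAt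
    exact ((h1.sub h2).continuousWithinAt)
  have hUopen : IsOpen U :=
    hYrcont.isOpen_inter_preimage (hΩopen.preimage (piL d).continuous) isOpen_Ioi
  have hp0U : p0 ∈ U := by
    constructor
    · show piL d p0 ∈ Ω
      rw [hπ]; exact hz
    · show Yr p0 ∈ Set.Ioi 0
      rw [Set.mem_Ioi, hYrdef]
      simp only [hπ, hlast]
      linarith
  have hUnhds : U ∈ nhds p0 := hUopen.mem_nhds hp0U
  -- differentiability on U
  have hYrd : ∀ q, q ∈ U → DifferentiableAt ℝ Yr q := by
    intro q hq
    have h1 : DifferentiableAt ℝ (fun p : Fin (d+1) → ℂ => N (piL d p) ^ μ) q :=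
      (hFrd _ hq.1).comp q (piL d).differentiableAt
    have h2 : DifferentiableAt ℝ (fun p : Fin (d+1) → ℂ => ‖p (Fin.last d)‖ ^ 2) q :=
      ((habs2.comp (ContinuousLinearMap.proj (R := ℝ)
        (φ := fun _ : Fin (d+1) => ℂ) (Fin.last d)).contDiff).differentiable hone_le) q
    exact h1.sub h2
  have hYcd : ∀ q, q ∈ U → DifferentiableAt ℝ Yc q := by
    intro q hq
    exact ((hFcd _ hq.1).comp q (piL d).differentiableAt).sub
      (cl.differentiableAt.mul cj.differentiableAt)
  have hYcne : ∀ q, q ∈ U → Yc q ≠ 0 := by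
    intro q hq
    rw [hYcYr q]
    exact Complex.ofReal_ne_zero.mpr (Set.mem_Ioi.mp hq.2).ne'
  -- derivatives of the coordinate CLMs
  have hpi_c : ∀ (k' : Fin d) (x : ℂ),
      (Pi.single k'.castSucc x : Fin (d+1) → ℂ) (Fin.last d) = 0 := fun k' x => by
    simp [Pi.single_eq_of_ne (Fin.castSucc_lt_last k').ne']
  have hpi_l : ∀ (x : ℂ), (Pi.single (Fin.last d) x : Fin (d+1) → ℂ) (Fin.last d) = x :=
    fun x => by simp
  have hcl_single_c : ∀ (k' : Fin d) (x : ℂ), cl (Pi.single k'.castSucc x) = 0 := by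
    intro k' x
    rw [hclval, hpi_c]
  have hcl_single_l : ∀ (x : ℂ), cl (Pi.single (Fin.last d) x) = x := by
    intro x; rw [hclval, hpi_l]
  have hcj_single_c : ∀ (k' : Fin d) (x : ℂ), cj (Pi.single k'.castSucc x) = 0 := by
    intro k' x
    rw [hcjval, hpi_c, map_zero]
  have hcj_single_l : ∀ (x : ℂ), cj (Pi.single (Fin.last d) x) = (starRingEnd ℂ) x := by
    intro x; rw [hcjval, hpi_l]
  have hwDcl_c : ∀ (k' : Fin d) (p : Fin (d+1) → ℂ), wD k'.castSucc (fun q => cl q) p = 0 := by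
    intro k' p; rw [wD_clm, hcl_single_c, hcl_single_c]; simp
  have hwDbarcl_c : ∀ (k' : Fin d) (p : Fin (d+1) → ℂ),
      wDbar k'.castSucc (fun q => cl q) p = 0 := by
    intro k' p; rw [wDbar_clm, hcl_single_c, hcl_single_c]; simp
  have hwDcl_l : ∀ (p : Fin (d+1) → ℂ), wD (Fin.last d) (fun q => cl q) p = 1 := by
    intro p; rw [wD_clm, hcl_single_l, hcl_single_l]
    rw [Complex.I_mul_I]; norm_num
  have hwDbarcl_l : ∀ (p : Fin (d+1) → ℂ), wDbar (Fin.last d) (fun q => cl q) p = 0 := by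
    intro p; rw [wDbar_clm, hcl_single_l, hcl_single_l]
    rw [Complex.I_mul_I]; norm_num
  have hwDcj_c : ∀ (k' : Fin d) (p : Fin (d+1) → ℂ), wD k'.castSucc (fun q => cj q) p = 0 := by
    intro k' p; rw [wD_clm, hcj_single_c, hcj_single_c]; simp
  have hwDbarcj_c : ∀ (k' : Fin d) (p : Fin (d+1) → ℂ),
      wDbar k'.castSucc (fun q => cj q) p = 0 := by
    intro k' p; rw [wDbar_clm, hcj_single_c, hcj_single_c]; simp
  have hwDcj_l : ∀ (p : Fin (d+1) → ℂ), wD (Fin.last d) (fun q => cj q) p = 0 := by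
    intro p; rw [wD_clm, hcj_single_l, hcj_single_l, _root_.map_one, Complex.conj_I]
    ring_nf
    rw [Complex.I_sq]; norm_num
  have hwDbarcj_l : ∀ (p : Fin (d+1) → ℂ), wDbar (Fin.last d) (fun q => cj q) p = 1 := by
    intro p; rw [wDbar_clm, hcj_single_l, hcj_single_l, _root_.map_one, Complex.conj_I]
    ring_nf
    rw [Complex.I_sq]; norm_num
  -- first derivatives of Yc
  have hYcD1 : ∀ (j' : Fin d) q, q ∈ U → wD j'.castSucc Yc q = wD j' Fc (piL d q) := by
    intro j' q hq
    have h1 : wD j'.castSucc Yc q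
        = wD j'.castSucc (fun p => Fc (piL d p)) q - wD j'.castSucc (fun p => cl p * cj p) q :=
      wD_sub _ ((hFcd _ hq.1).comp q (piL d).differentiableAt)
        (cl.differentiableAt.mul cj.differentiableAt)
    have h2 : wD j'.castSucc (fun p => Fc (piL d p)) q = wD j' Fc (piL d q) :=
      wD_comp_piL j' (hFcd _ hq.1)
    have h3 : wD j'.castSucc (fun p => cl p * cj p) q
        = wD j'.castSucc (fun p => cl p) q * cj q + cl q * wD j'.castSucc (fun p => cj p) q :=
      wD_mul _ cl.differentiableAt cj.differentiableAt
    rw [h1, h2, h3, hwDcl_c, hwDcj_c]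
    ring
  have hYcD2 : ∀ (k' : Fin d) q, q ∈ U → wDbar k'.castSucc Yc q = wDbar k' Fc (piL d q) := by
    intro k' q hq
    have h1 : wDbar k'.castSucc Yc q
        = wDbar k'.castSucc (fun p => Fc (piL d p)) q
          - wDbar k'.castSucc (fun p => cl p * cj p) q :=
      wDbar_sub _ ((hFcd _ hq.1).comp q (piL d).differentiableAt)
        (cl.differentiableAt.mul cj.differentiableAt)
    have h2 : wDbar k'.castSucc (fun p => Fc (piL d p)) q = wDbar k' Fc (piL d q) :=
      wDbar_comp_piL k' (hFcd _ hq.1)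
    have h3 : wDbar k'.castSucc (fun p => cl p * cj p) q
        = wDbar k'.castSucc (fun p => cl p) q * cj q
          + cl q * wDbar k'.castSucc (fun p => cj p) q :=
      wDbar_mul _ cl.differentiableAt cj.differentiableAt
    rw [h1, h2, h3, hwDbarcl_c, hwDbarcj_c]
    ring
  have hYcD3 : ∀ q, q ∈ U → wD (Fin.last d) Yc q = -(cj q) := by
    intro q hq
    have h1 : wD (Fin.last d) Yc q
        = wD (Fin.last d) (fun p => Fc (piL d p)) q - wD (Fin.last d) (fun p => cl p * cj p) q :=
      wD_sub _ ((hFcd _ hq.1).comp q (piL d).differentiableAt)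
        (cl.differentiableAt.mul cj.differentiableAt)
    have h2 : wD (Fin.last d) (fun p => Fc (piL d p)) q = 0 :=
      wD_last_comp_piL (hFcd _ hq.1)
    have h3 : wD (Fin.last d) (fun p => cl p * cj p) q
        = wD (Fin.last d) (fun p => cl p) q * cj q + cl q * wD (Fin.last d) (fun p => cj p) q :=
      wD_mul _ cl.differentiableAt cj.differentiableAt
    rw [h1, h2, h3, hwDcl_l, hwDcj_l]
    ring
  have hYcD4 : ∀ q, q ∈ U → wDbar (Fin.last d) Yc q = -(cl q) := by
    intro q hq
    have h1 : wDbar (Fin.last d) Yc q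
        = wDbar (Fin.last d) (fun p => Fc (piL d p)) q
          - wDbar (Fin.last d) (fun p => cl p * cj p) q :=
      wDbar_sub _ ((hFcd _ hq.1).comp q (piL d).differentiableAt)
        (cl.differentiableAt.mul cj.differentiableAt)
    have h2 : wDbar (Fin.last d) (fun p => Fc (piL d p)) q = 0 :=
      wDbar_last_comp_piL (hFcd _ hq.1)
    have h3 : wDbar (Fin.last d) (fun p => cl p * cj p) q
        = wDbar (Fin.last d) (fun p => cl p) q * cj q
          + cl q * wDbar (Fin.last d) (fun p => cj p) q :=
      wDbar_mul _ cl.differentiableAt cj.differentiableAt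
    rw [h1, h2, h3, hwDbarcl_l, hwDbarcj_l]
    ring
  -- first derivatives of the potential on U
  have hE1 : ∀ (k' : Fin d), ∀ q ∈ U, wDbar k'.castSucc (CHpot d μ N) q
      = -(wDbar k' Fc (piL d q) * (Yc q)⁻¹) := by
    intro k' q hq
    have hYrq : (0 : ℝ) < Yr q := Set.mem_Ioi.mp hq.2
    have e0 : wDbar k'.castSucc (CHpot d μ N) q
        = wDbar k'.castSucc (fun p => -(((Real.log (Yr p) : ℝ) : ℂ))) q := by rw [hCH]
    have e1 : wDbar k'.castSucc (fun p => -(((Real.log (Yr p) : ℝ) : ℂ))) q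
        = -(wDbar k'.castSucc (fun p => ((Real.log (Yr p) : ℝ) : ℂ)) q) := wDbar_neg _ _ _
    have e2 : wDbar k'.castSucc (fun p => ((Real.log (Yr p) : ℝ) : ℂ)) q
        = wDbar k'.castSucc (fun p => ((Yr p : ℝ) : ℂ)) q * (((Yr q : ℝ) : ℂ))⁻¹ :=
      wDbar_ofReal_log _ (hYrd q hq) hYrq.ne'
    have e3 : (fun p => ((Yr p : ℝ) : ℂ)) = Yc := funext fun p => (hYcYr p).symm
    rw [e0, e1, e2, e3, hYcD2 k' q hq, ← hYcYr q]
  have hE2 : ∀ q ∈ U, wDbar (Fin.last d) (CHpot d μ N) q = cl q * (Yc q)⁻¹ := by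
    intro q hq
    have hYrq : (0 : ℝ) < Yr q := Set.mem_Ioi.mp hq.2
    have e0 : wDbar (Fin.last d) (CHpot d μ N) q
        = wDbar (Fin.last d) (fun p => -(((Real.log (Yr p) : ℝ) : ℂ))) q := by rw [hCH]
    have e1 : wDbar (Fin.last d) (fun p => -(((Real.log (Yr p) : ℝ) : ℂ))) q
        = -(wDbar (Fin.last d) (fun p => ((Real.log (Yr p) : ℝ) : ℂ)) q) := wDbar_neg _ _ _
    have e2 : wDbar (Fin.last d) (fun p => ((Real.log (Yr p) : ℝ) : ℂ)) q
        = wDbar (Fin.last d) (fun p => ((Yr p : ℝ) : ℂ)) q * (((Yr q : ℝ) : ℂ))⁻¹ :=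
      wDbar_ofReal_log _ (hYrd q hq) hYrq.ne'
    have e3 : (fun p => ((Yr p : ℝ) : ℂ)) = Yc := funext fun p => (hYcYr p).symm
    rw [e0, e1, e2, e3, hYcD4 q hq, ← hYcYr q]
    ring
  -- values at p0
  set y : ℂ := ((N z ^ μ - ‖w‖ ^ 2 : ℝ) : ℂ) with hydef
  have hy0 : y ≠ 0 := Complex.ofReal_ne_zero.mpr (sub_pos.mpr hw).ne'
  have hYcp0 : Yc p0 = y := by
    rw [hYcYr p0, hydef, hYrdef]
    simp only [hπ, hlast]
  have hYcp0ne : Yc p0 ≠ 0 := by rw [hYcp0]; exact hy0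
  have hYcdp0 : DifferentiableAt ℝ Yc p0 := hYcd p0 hp0U
  have hinvd : DifferentiableAt ℝ (fun q => (Yc q)⁻¹) p0 := hYcdp0.inv hYcp0ne
  have hWkd : ∀ k' : Fin d, DifferentiableAt ℝ (fun q => wDbar k' Fc (piL d q)) p0 := by
    intro k'
    have h : DifferentiableAt ℝ (wDbar k' Fc) (piL d p0) := by
      rw [hπ]; exact hCkd k' z hz
    exact h.comp p0 (piL d).differentiableAt
  have hclp0 : cl p0 = w := by rw [hclval, hlast]
  have hcjp0 : cj p0 = (starRingEnd ℂ) w := by rw [hcjval, hlast]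
  set t : ℂ := w * (starRingEnd ℂ) w with htdef
  have hfyt : f = y + t := by
    rw [hfdef, hydef, htdef, Complex.mul_conj, Complex.ofReal_sub]
    rw [← Complex.sq_norm]
    ring
  have hyt0 : y + t ≠ 0 := by rw [← hfyt]; exact hf0
  -- second derivatives: the entries of the Cartan-Hartogs metric at p0
  have hA1 : ∀ j' k' : Fin d, gCHmat d μ N p0 j'.castSucc k'.castSucc
      = (f/y) * gOmMat d μ N z j' k' + a j' * c k' * t / (y^2 * f) := by
    intro j' k'
    have e1 : wD j'.castSucc (wDbar k'.castSucc (CHpot d μ N)) p0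
        = wD j'.castSucc (fun q => -(wDbar k' Fc (piL d q) * (Yc q)⁻¹)) p0 :=
      wD_congr _ (Filter.eventuallyEq_of_mem hUnhds (fun q hq => hE1 k' q hq))
    have e2 : wD j'.castSucc (fun q => -(wDbar k' Fc (piL d q) * (Yc q)⁻¹)) p0
        = -(wD j'.castSucc (fun q => wDbar k' Fc (piL d q) * (Yc q)⁻¹) p0) := wD_neg _ _ _
    have e3 : wD j'.castSucc (fun q => wDbar k' Fc (piL d q) * (Yc q)⁻¹) p0
        = wD j'.castSucc (fun q => wDbar k' Fc (piL d q)) p0 * (Yc p0)⁻¹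
          + wDbar k' Fc (piL d p0) * wD j'.castSucc (fun q => (Yc q)⁻¹) p0 :=
      wD_mul _ (hWkd k') hinvd
    have e4 : wD j'.castSucc (fun q => wDbar k' Fc (piL d q)) p0
        = wD j' (wDbar k' Fc) (piL d p0) :=
      wD_comp_piL j' (by rw [hπ]; exact hCkd k' z hz)
    have e5 : wD j'.castSucc (fun q => (Yc q)⁻¹) p0
        = -(wD j'.castSucc Yc p0) / (Yc p0)^2 := wD_inv _ hYcdp0 hYcp0ne
    have e6 : wD j'.castSucc Yc p0 = wD j' Fc (piL d p0) := hYcD1 j' p0 hp0U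
    show wD j'.castSucc (wDbar k'.castSucc (CHpot d μ N)) p0 = _
    rw [e1, e2, e3, e4, e5, e6, hπ, hYcp0, hgOmval j' k']
    rw [show wD j' (wDbar k' Fc) z = B j' k' from rfl,
      show wDbar k' Fc z = c k' from rfl,
      show wD j' Fc z = a j' from rfl]
    rw [hfyt]
    field_simp [hy0, hyt0]
    ring
  have hA2 : ∀ j' : Fin d, gCHmat d μ N p0 j'.castSucc (Fin.last d)
      = -(w * a j') / y^2 := by
    intro j'
    have e1 : wD j'.castSucc (wDbar (Fin.last d) (CHpot d μ N)) p0
        = wD j'.castSucc (fun q => cl q * (Yc q)⁻¹) p0 :=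
      wD_congr _ (Filter.eventuallyEq_of_mem hUnhds (fun q hq => hE2 q hq))
    have e3 : wD j'.castSucc (fun q => cl q * (Yc q)⁻¹) p0
        = wD j'.castSucc (fun q => cl q) p0 * (Yc p0)⁻¹
          + cl p0 * wD j'.castSucc (fun q => (Yc q)⁻¹) p0 :=
      wD_mul _ cl.differentiableAt hinvd
    have e5 : wD j'.castSucc (fun q => (Yc q)⁻¹) p0
        = -(wD j'.castSucc Yc p0) / (Yc p0)^2 := wD_inv _ hYcdp0 hYcp0ne
    have e6 : wD j'.castSucc Yc p0 = wD j' Fc (piL d p0) := hYcD1 j' p0 hp0U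
    show wD j'.castSucc (wDbar (Fin.last d) (CHpot d μ N)) p0 = _
    rw [e1, e3, e5, e6, hπ, hYcp0, hwDcl_c, hclp0]
    rw [show wD j' Fc z = a j' from rfl]
    ring
  have hA3 : ∀ k' : Fin d, gCHmat d μ N p0 (Fin.last d) k'.castSucc
      = -((starRingEnd ℂ) w * c k') / y^2 := by
    intro k'
    have e1 : wD (Fin.last d) (wDbar k'.castSucc (CHpot d μ N)) p0
        = wD (Fin.last d) (fun q => -(wDbar k' Fc (piL d q) * (Yc q)⁻¹)) p0 :=
      wD_congr _ (Filter.eventuallyEq_of_mem hUnhds (fun q hq => hE1 k' q hq))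
    have e2 : wD (Fin.last d) (fun q => -(wDbar k' Fc (piL d q) * (Yc q)⁻¹)) p0
        = -(wD (Fin.last d) (fun q => wDbar k' Fc (piL d q) * (Yc q)⁻¹) p0) := wD_neg _ _ _
    have e3 : wD (Fin.last d) (fun q => wDbar k' Fc (piL d q) * (Yc q)⁻¹) p0
        = wD (Fin.last d) (fun q => wDbar k' Fc (piL d q)) p0 * (Yc p0)⁻¹
          + wDbar k' Fc (piL d p0) * wD (Fin.last d) (fun q => (Yc q)⁻¹) p0 :=
      wD_mul _ (hWkd k') hinvd
    have e4 : wD (Fin.last d) (fun q => wDbar k' Fc (piL d q)) p0 = 0 :=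
      wD_last_comp_piL (by rw [hπ]; exact hCkd k' z hz)
    have e5 : wD (Fin.last d) (fun q => (Yc q)⁻¹) p0
        = -(wD (Fin.last d) Yc p0) / (Yc p0)^2 := wD_inv _ hYcdp0 hYcp0ne
    have e6 : wD (Fin.last d) Yc p0 = -(cj p0) := hYcD3 p0 hp0U
    show wD (Fin.last d) (wDbar k'.castSucc (CHpot d μ N)) p0 = _
    rw [e1, e2, e3, e4, e5, e6, hπ, hYcp0, hcjp0]
    rw [show wDbar k' Fc z = c k' from rfl]
    ring
  have hA4 : gCHmat d μ N p0 (Fin.last d) (Fin.last d) = f / y^2 := by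
    have e1 : wD (Fin.last d) (wDbar (Fin.last d) (CHpot d μ N)) p0
        = wD (Fin.last d) (fun q => cl q * (Yc q)⁻¹) p0 :=
      wD_congr _ (Filter.eventuallyEq_of_mem hUnhds (fun q hq => hE2 q hq))
    have e3 : wD (Fin.last d) (fun q => cl q * (Yc q)⁻¹) p0
        = wD (Fin.last d) (fun q => cl q) p0 * (Yc p0)⁻¹
          + cl p0 * wD (Fin.last d) (fun q => (Yc q)⁻¹) p0 :=
      wD_mul _ cl.differentiableAt hinvd
    have e5 : wD (Fin.last d) (fun q => (Yc q)⁻¹) p0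
        = -(wD (Fin.last d) Yc p0) / (Yc p0)^2 := wD_inv _ hYcdp0 hYcp0ne
    have e6 : wD (Fin.last d) Yc p0 = -(cj p0) := hYcD3 p0 hp0U
    show wD (Fin.last d) (wDbar (Fin.last d) (CHpot d μ N)) p0 = _
    rw [e1, e3, e5, e6, hYcp0, hwDcl_l, hclp0, hcjp0, hfyt, htdef]
    field_simp [hy0]
  -- the matrix algebra
  set GΩ : Matrix (Fin d) (Fin d) ℂ := gOmMat d μ N z with hGΩdef
  set Gi : Matrix (Fin d) (Fin d) ℂ := (gOmMat d μ N z)⁻¹ with hGidef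
  have hGG : GΩ * Gi = 1 := Matrix.mul_nonsing_inv _ (hgOmPD z hz).det_pos.ne'.isUnit
  have hGmul : ∀ j' k' : Fin d, (∑ l, GΩ j' l * Gi l k') = if j' = k' then 1 else 0 := by
    intro j' k'
    have h := congrFun (congrFun hGG j') k'
    rw [Matrix.mul_apply] at h
    rw [h, Matrix.one_apply]
  set rv : Fin d → ℂ := fun j' => ∑ m, Gi j' m * a m with hrdef
  set qv : Fin d → ℂ := fun k' => ∑ l, c l * Gi l k' with hqdef
  set s : ℂ := ∑ l, c l * rv l with hsdef
  have hqv' : ∀ k' : Fin d, (∑ l, c l * Gi l k') = qv k' := fun _ => rfl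
  have hGr : ∀ j' : Fin d, (∑ l, GΩ j' l * rv l) = a j' := by
    intro j'
    have h1 : ∀ l, GΩ j' l * rv l = ∑ m, GΩ j' l * Gi l m * a m := by
      intro l
      rw [hrdef, Finset.mul_sum]
      exact Finset.sum_congr rfl fun m _ => by ring
    rw [Finset.sum_congr rfl fun l _ => h1 l, Finset.sum_comm]
    have h2 : ∀ m, (∑ l, GΩ j' l * Gi l m * a m) = (if j' = m then 1 else 0) * a m := by
      intro m
      rw [← Finset.sum_mul, hGmul j' m]
    rw [Finset.sum_congr rfl fun m _ => h2 m]
    simp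
  set M : Matrix (Fin (d+1)) (Fin (d+1)) ℂ := Matrix.of (fun α β =>
    Fin.lastCases
      (Fin.lastCases (y^2/f + t*y*s/f^3) (fun k' => (y * (starRingEnd ℂ) w / f^2) * qv k') β)
      (fun j' => Fin.lastCases ((y*w/f^2) * rv j') (fun k' => (y/f) * Gi j' k') β) α)
    with hMdef
  have hM1 : ∀ j' k' : Fin d, M j'.castSucc k'.castSucc = (y/f) * Gi j' k' := by
    intro j' k'; rw [hMdef]; simp [Matrix.of_apply]
  have hM2 : ∀ j' : Fin d, M j'.castSucc (Fin.last d) = (y*w/f^2) * rv j' := by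
    intro j'; rw [hMdef]; simp [Matrix.of_apply]
  have hM3 : ∀ k' : Fin d, M (Fin.last d) k'.castSucc
      = (y * (starRingEnd ℂ) w / f^2) * qv k' := by
    intro k'; rw [hMdef]; simp [Matrix.of_apply]
  have hM4 : M (Fin.last d) (Fin.last d) = y^2/f + t*y*s/f^3 := by
    rw [hMdef]; simp [Matrix.of_apply]
  have hAM : gCHmat d μ N p0 * M = 1 := by
    ext α β
    rw [Matrix.mul_apply, Fin.sum_univ_castSucc]
    induction β using Fin.lastCases with
    | last =>
      induction α using Fin.lastCases with
      | last =>
        have hterm : ∀ l : Fin d,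
            gCHmat d μ N p0 (Fin.last d) l.castSucc * M l.castSucc (Fin.last d)
            = (-(t*y/(y^2*f^2))) * (c l * rv l) := by
          intro l
          rw [hA3 l, hM2 l, htdef]
          ring
        rw [Finset.sum_congr rfl fun l _ => hterm l, ← Finset.mul_sum, ← hsdef,
          hA4, hM4, Matrix.one_apply_eq]
        field_simp
        ring
      | cast j' =>
        have hterm : ∀ l : Fin d,
            gCHmat d μ N p0 j'.castSucc l.castSucc * M l.castSucc (Fin.last d)
            = (w/f) * (GΩ j' l * rv l) + (t*w*(a j')/(y*f^3)) * (c l * rv l) := by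
          intro l
          rw [hA1 j' l, hM2 l]
          field_simp
        rw [Finset.sum_congr rfl fun l _ => hterm l, Finset.sum_add_distrib,
          ← Finset.mul_sum, ← Finset.mul_sum, hGr j', ← hsdef, hA2 j', hM4,
          Matrix.one_apply_ne (by exact (Fin.castSucc_lt_last j').ne)]
        field_simp
        ring
    | cast k' =>
      induction α using Fin.lastCases with
      | last =>
        have hterm : ∀ l : Fin d,
            gCHmat d μ N p0 (Fin.last d) l.castSucc * M l.castSucc k'.castSucc
            = (-((starRingEnd ℂ) w/(y*f))) * (c l * Gi l k') := by
          intro l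
          rw [hA3 l, hM1 l k']
          field_simp
        rw [Finset.sum_congr rfl fun l _ => hterm l, ← Finset.mul_sum, hqv' k',
          hA4, hM3 k', Matrix.one_apply_ne (by exact (Fin.castSucc_lt_last k').ne')]
        field_simp
        ring
      | cast j' =>
        have hterm : ∀ l : Fin d,
            gCHmat d μ N p0 j'.castSucc l.castSucc * M l.castSucc k'.castSucc
            = GΩ j' l * Gi l k' + (t*(a j')/(y*f^2)) * (c l * Gi l k') := by
          intro l
          rw [hA1 j' l, hM1 l k']
          field_simp
        rw [Finset.sum_congr rfl fun l _ => hterm l, Finset.sum_add_distrib,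
          ← Finset.mul_sum, hGmul j' k', hqv' k',
          hA2 j', hM3 k']
        have hone : (1 : Matrix (Fin (d+1)) (Fin (d+1)) ℂ) j'.castSucc k'.castSucc
            = if j' = k' then 1 else 0 := by
          rw [Matrix.one_apply]
          simp [Fin.castSucc_inj]
        rw [hone, htdef]
        field_simp
        split_ifs <;> ring
  have hinv : (gCHmat d μ N p0)⁻¹ = M := Matrix.inv_eq_right_inv hAM
  rw [hinv, hM1 j k, Complex.ofReal_div, hydef, hfdef]
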